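/- The provability relations of CLKID^ω and CLKID^ω_a coincide: a sequent Γ ⊢ Δ is provable in CLKID^ω if and only if it is provable in CLKID^ω_a. -/

import Mathlib

namespace CLKID

/-- Terms of the language: variables, the constant `0`, and the unary function `s`. -/
inductive Tm : Type where
  | var : ℕ → Tm
  | zero : Tm
  | s : Tm → Tm
deriving DecidableEq

/-- `sIter n t` is the term `s^n t`. -/
def sIter : ℕ → Tm → Tm
  | 0, t => t
  | n + 1, t => Tm.s (sIter n t)

/-- Substitution on terms. -/
def Tm.subst (θ : ℕ → Tm) : Tm → Tm
  | .var x => θ x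
  | .zero => .zero
  | .s t => .s (t.subst θ)

/-- Free variables of a term. -/
def Tm.fv : Tm → Set ℕ
  | .var x => {x}
  | .zero => ∅
  | .s t => t.fv

/-- Subterms of a term. -/
def Tm.sub : Tm → Set Tm
  | .var x => {Tm.var x}
  | .zero => {Tm.zero}
  | .s t => insert (Tm.s t) t.sub

/-- The variable of a term (`none` if the term is of the form `s^n 0`). -/
def Tm.varOf : Tm → Option ℕ
  | .var x => some x
  | .zero => none
  | .s t => t.varOf

/-- Formulas: equations, the two inductive-predicate atoms `Add1`/`Add2`,
    and the usual first-order connectives and quantifiers. -/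
inductive Fm : Type where
  | eq : Tm → Tm → Fm
  | add1 : Tm → Tm → Tm → Fm
  | add2 : Tm → Tm → Tm → Fm
  | not : Fm → Fm
  | and : Fm → Fm → Fm
  | or : Fm → Fm → Fm
  | imp : Fm → Fm → Fm
  | all : ℕ → Fm → Fm
  | ex : ℕ → Fm → Fm
deriving DecidableEq

/-- Substitution on formulas. -/
def Fm.subst (θ : ℕ → Tm) : Fm → Fm
  | .eq t u => .eq (t.subst θ) (u.subst θ)
  | .add1 a b c => .add1 (a.subst θ) (b.subst θ) (c.subst θ)
  | .add2 a b c => .add2 (a.subst θ) (b.subst θ) (c.subst θ)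
  | .not φ => .not (φ.subst θ)
  | .and φ ψ => .and (φ.subst θ) (ψ.subst θ)
  | .or φ ψ => .or (φ.subst θ) (ψ.subst θ)
  | .imp φ ψ => .imp (φ.subst θ) (ψ.subst θ)
  | .all x φ => .all x (φ.subst (Function.update θ x (Tm.var x)))
  | .ex x φ => .ex x (φ.subst (Function.update θ x (Tm.var x)))

/-- Free variables of a formula. -/
def Fm.fv : Fm → Set ℕ
  | .eq t u => t.fv ∪ u.fv
  | .add1 a b c => a.fv ∪ b.fv ∪ c.fv
  | .add2 a b c => a.fv ∪ b.fv ∪ c.fv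
  | .not φ => φ.fv
  | .and φ ψ => φ.fv ∪ ψ.fv
  | .or φ ψ => φ.fv ∪ ψ.fv
  | .imp φ ψ => φ.fv ∪ ψ.fv
  | .all x φ => φ.fv \ {x}
  | .ex x φ => φ.fv \ {x}

/-- Terms occurring in a formula. -/
def Fm.tms : Fm → Set Tm
  | .eq t u => t.sub ∪ u.sub
  | .add1 a b c => a.sub ∪ b.sub ∪ c.sub
  | .add2 a b c => a.sub ∪ b.sub ∪ c.sub
  | .not φ => φ.tms
  | .and φ ψ => φ.tms ∪ ψ.tms
  | .or φ ψ => φ.tms ∪ ψ.tms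
  | .imp φ ψ => φ.tms ∪ ψ.tms
  | .all _ φ => φ.tms
  | .ex _ φ => φ.tms

/-- The substitution `[x := t]`. -/
def sub1 (x : ℕ) (t : Tm) : ℕ → Tm := fun y => if y = x then t else Tm.var y

/-- The simultaneous substitution `[v1 := t, v2 := u]`. -/
def sub2 (v1 v2 : ℕ) (t u : Tm) : ℕ → Tm :=
  fun z => if z = v1 then t else if z = v2 then u else Tm.var z

/-- `≡_Γ`: the smallest congruence relation on terms containing all pairs `(t, u)`
    with the equation `t = u` in `Γ`. -/
inductive EqvTm (Γ : Set Fm) : Tm → Tm → Prop where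
  | base {t u : Tm} : Fm.eq t u ∈ Γ → EqvTm Γ t u
  | refl (t : Tm) : EqvTm Γ t t
  | symm {t u : Tm} : EqvTm Γ t u → EqvTm Γ u t
  | trans {t u v : Tm} : EqvTm Γ t u → EqvTm Γ u v → EqvTm Γ t v
  | sCongr {t u : Tm} : EqvTm Γ t u → EqvTm Γ (Tm.s t) (Tm.s u)

/-- `t ~_Γ u` : `s^n t ≡_Γ s^m u` for some naturals `n`, `m`. -/
def DepTm (Γ : Set Fm) (t u : Tm) : Prop := ∃ n m : ℕ, EqvTm Γ (sIter n t) (sIter m u)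

/-- A sequent: a pair of finite sets of formulas. -/
structure Seq where
  ant : Finset Fm
  suc : Finset Fm

/-- The antecedent of a sequent, as a set of formulas. -/
def antSet (S : Seq) : Set Fm := ↑S.ant

/-- `[Γ]` from Lemma on chains: `{ s^n t1 = s^n t2 | t1 = t2 ∈ Γ or t2 = t1 ∈ Γ }`. -/
def brkt (Γ : Set Fm) : Set Fm :=
  {φ | ∃ (n : ℕ) (t1 t2 : Tm), φ = Fm.eq (sIter n t1) (sIter n t2) ∧
        (Fm.eq t1 t2 ∈ Γ ∨ Fm.eq t2 t1 ∈ Γ)}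

/-- `B1(Γ ⊢ Δ)` : second arguments of `Add1` atoms in the consequent. -/
def B1 (S : Seq) : Set Tm := {b | ∃ a c, Fm.add1 a b c ∈ S.suc}

/-- `C(Γ ⊢ Δ)` : third arguments of `Add2` atoms in the antecedent
    or `Add1` atoms in the consequent. -/
def Cset (S : Seq) : Set Tm :=
  {c | (∃ a b, Fm.add2 a b c ∈ S.ant) ∨ (∃ a b, Fm.add1 a b c ∈ S.suc)}

/-- Index sequent. -/
def IndexSequent (S : Seq) : Prop :=
  (∀ t ∈ B1 S, ∀ u ∈ Cset S, ¬ DepTm (antSet S) t u) ∧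
  (∀ b ∈ B1 S, ∀ b' ∈ B1 S, ∀ n m : ℕ, EqvTm (antSet S) (sIter n b) (sIter m b') → n = m)

/-! ## The cyclic proof systems `CLKID^ω` and `CLKID^ω_a` -/

/-- Rule labels; each label carries the instance data needed to describe the
    rule application (principal formulas, substitutions, case variables, ...).
    `bud` labels bud leaves of cyclic derivation trees. -/
inductive Rule : Type where
  | ax
  | weak
  | cut (φ : Fm)
  | subst (θ : ℕ → Tm)
  | negL (φ : Fm)
  | negR (φ : Fm)
  | andL (φ ψ : Fm)
  | andR (φ ψ : Fm)
  | orL (φ ψ : Fm)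
  | orR (φ ψ : Fm)
  | impL (φ ψ : Fm)
  | impR (φ ψ : Fm)
  | allL (x : ℕ) (t : Tm) (φ : Fm)
  | allR (x : ℕ) (φ : Fm)
  | exL (x : ℕ) (φ : Fm)
  | exR (x : ℕ) (t : Tm) (φ : Fm)
  | eqR (t : Tm)
  | eqL (v1 v2 : ℕ) (t u : Tm)
  | eqLa (v1 v2 : ℕ) (t u : Tm)
  | add1R1
  | add1R2 (a b c : Tm)
  | add2R1
  | add2R2 (a b c : Tm)
  | caseAdd1 (a b c : Tm) (x y z : ℕ)
  | caseAdd2 (a b c : Tm) (x y z : ℕ)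
  | bud

/-- `Inf r S L` : the sequent `S` follows from the list of premises `L`
    by the rule (instance) `r`. -/
inductive Inf : Rule → Seq → List Seq → Prop where
  | ax {Γ Δ : Finset Fm} :
      (Γ ∩ Δ).Nonempty → Inf .ax ⟨Γ, Δ⟩ []
  | weak {Γ Δ Γ' Δ' : Finset Fm} :
      Γ' ⊆ Γ → Δ' ⊆ Δ → Inf .weak ⟨Γ, Δ⟩ [⟨Γ', Δ'⟩]
  | cut {Γ Δ : Finset Fm} {φ : Fm} :
      Inf (.cut φ) ⟨Γ, Δ⟩ [⟨Γ, insert φ Δ⟩, ⟨insert φ Γ, Δ⟩]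
  | subst {Γ Δ : Finset Fm} {θ : ℕ → Tm} :
      Inf (.subst θ) ⟨Γ.image (Fm.subst θ), Δ.image (Fm.subst θ)⟩ [⟨Γ, Δ⟩]
  | negL {Γ Δ : Finset Fm} {φ : Fm} :
      Inf (.negL φ) ⟨insert (.not φ) Γ, Δ⟩ [⟨Γ, insert φ Δ⟩]
  | negR {Γ Δ : Finset Fm} {φ : Fm} :
      Inf (.negR φ) ⟨Γ, insert (.not φ) Δ⟩ [⟨insert φ Γ, Δ⟩]
  | andL {Γ Δ : Finset Fm} {φ ψ : Fm} :
      Inf (.andL φ ψ) ⟨insert (.and φ ψ) Γ, Δ⟩ [⟨insert φ (insert ψ Γ), Δ⟩]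
  | andR {Γ Δ : Finset Fm} {φ ψ : Fm} :
      Inf (.andR φ ψ) ⟨Γ, insert (.and φ ψ) Δ⟩ [⟨Γ, insert φ Δ⟩, ⟨Γ, insert ψ Δ⟩]
  | orL {Γ Δ : Finset Fm} {φ ψ : Fm} :
      Inf (.orL φ ψ) ⟨insert (.or φ ψ) Γ, Δ⟩ [⟨insert φ Γ, Δ⟩, ⟨insert ψ Γ, Δ⟩]
  | orR {Γ Δ : Finset Fm} {φ ψ : Fm} :
      Inf (.orR φ ψ) ⟨Γ, insert (.or φ ψ) Δ⟩ [⟨Γ, insert φ (insert ψ Δ)⟩]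
  | impL {Γ Δ : Finset Fm} {φ ψ : Fm} :
      Inf (.impL φ ψ) ⟨insert (.imp φ ψ) Γ, Δ⟩ [⟨Γ, insert φ Δ⟩, ⟨insert ψ Γ, Δ⟩]
  | impR {Γ Δ : Finset Fm} {φ ψ : Fm} :
      Inf (.impR φ ψ) ⟨Γ, insert (.imp φ ψ) Δ⟩ [⟨insert φ Γ, insert ψ Δ⟩]
  | allL {Γ Δ : Finset Fm} {x : ℕ} {t : Tm} {φ : Fm} :
      Inf (.allL x t φ) ⟨insert (.all x φ) Γ, Δ⟩ [⟨insert (φ.subst (sub1 x t)) Γ, Δ⟩]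
  | allR {Γ Δ : Finset Fm} {x : ℕ} {φ : Fm} :
      (∀ ψ ∈ Γ ∪ Δ, x ∉ Fm.fv ψ) →
      Inf (.allR x φ) ⟨Γ, insert (.all x φ) Δ⟩ [⟨Γ, insert φ Δ⟩]
  | exL {Γ Δ : Finset Fm} {x : ℕ} {φ : Fm} :
      (∀ ψ ∈ Γ ∪ Δ, x ∉ Fm.fv ψ) →
      Inf (.exL x φ) ⟨insert (.ex x φ) Γ, Δ⟩ [⟨insert φ Γ, Δ⟩]
  | exR {Γ Δ : Finset Fm} {x : ℕ} {t : Tm} {φ : Fm} :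
      Inf (.exR x t φ) ⟨Γ, insert (.ex x φ) Δ⟩ [⟨Γ, insert (φ.subst (sub1 x t)) Δ⟩]
  | eqR {Γ Δ : Finset Fm} {t : Tm} :
      Inf (.eqR t) ⟨Γ, insert (.eq t t) Δ⟩ []
  | eqL {Γ Δ : Finset Fm} {v1 v2 : ℕ} {t u : Tm} :
      Inf (.eqL v1 v2 t u)
        ⟨insert (.eq t u) (Γ.image (Fm.subst (sub2 v1 v2 t u))),
          Δ.image (Fm.subst (sub2 v1 v2 t u))⟩
        [⟨Γ.image (Fm.subst (sub2 v1 v2 u t)), Δ.image (Fm.subst (sub2 v1 v2 u t))⟩]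
  | eqLa {Γ Δ : Finset Fm} {v1 v2 : ℕ} {t u : Tm} :
      Inf (.eqLa v1 v2 t u)
        ⟨insert (.eq t u) (Γ.image (Fm.subst (sub2 v1 v2 t u))),
          Δ.image (Fm.subst (sub2 v1 v2 t u))⟩
        [⟨insert (.eq t u) (Γ.image (Fm.subst (sub2 v1 v2 u t))),
          Δ.image (Fm.subst (sub2 v1 v2 u t))⟩]
  | add1R1 {Γ Δ : Finset Fm} {b : Tm} :
      Inf .add1R1 ⟨Γ, insert (.add1 .zero b b) Δ⟩ []
  | add1R2 {Γ Δ : Finset Fm} {a b c : Tm} :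
      Inf (.add1R2 a b c) ⟨Γ, insert (.add1 (.s a) b (.s c)) Δ⟩ [⟨Γ, insert (.add1 a b c) Δ⟩]
  | add2R1 {Γ Δ : Finset Fm} {b : Tm} :
      Inf .add2R1 ⟨Γ, insert (.add2 .zero b b) Δ⟩ []
  | add2R2 {Γ Δ : Finset Fm} {a b c : Tm} :
      Inf (.add2R2 a b c) ⟨Γ, insert (.add2 (.s a) b c) Δ⟩ [⟨Γ, insert (.add2 a (.s b) c) Δ⟩]
  | caseAdd1 {Γ Δ : Finset Fm} {a b c : Tm} {x y z : ℕ} :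
      x ≠ y → x ≠ z → y ≠ z →
      (∀ ψ ∈ insert (Fm.add1 a b c) (Γ ∪ Δ), x ∉ Fm.fv ψ ∧ y ∉ Fm.fv ψ ∧ z ∉ Fm.fv ψ) →
      Inf (.caseAdd1 a b c x y z) ⟨insert (.add1 a b c) Γ, Δ⟩
        [⟨insert (.eq a .zero) (insert (.eq b (.var y)) (insert (.eq c (.var y)) Γ)), Δ⟩,
         ⟨insert (.eq a (.s (.var x))) (insert (.eq b (.var y)) (insert (.eq c (.s (.var z)))
            (insert (.add1 (.var x) (.var y) (.var z)) Γ))), Δ⟩]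
  | caseAdd2 {Γ Δ : Finset Fm} {a b c : Tm} {x y z : ℕ} :
      x ≠ y → x ≠ z → y ≠ z →
      (∀ ψ ∈ insert (Fm.add2 a b c) (Γ ∪ Δ), x ∉ Fm.fv ψ ∧ y ∉ Fm.fv ψ ∧ z ∉ Fm.fv ψ) →
      Inf (.caseAdd2 a b c x y z) ⟨insert (.add2 a b c) Γ, Δ⟩
        [⟨insert (.eq a .zero) (insert (.eq b (.var y)) (insert (.eq c (.var y)) Γ)), Δ⟩,
         ⟨insert (.eq a (.s (.var x))) (insert (.eq b (.var y)) (insert (.eq c (.var z))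
            (insert (.add2 (.var x) (.s (.var y)) (.var z)) Γ))), Δ⟩]

/-- A labeling of tree nodes (finite sequences of naturals) by sequents and rules;
    `none` means the node is not in the tree. -/
abbrev Lbl : Type := List ℕ → Option (Seq × Rule)

/-- The children of `σ` are labeled exactly by the premise list `prems`. -/
def childrenOK (f : Lbl) (σ : List ℕ) (prems : List Seq) : Prop :=
  (∀ i : Fin prems.length, ∃ r', f (σ ++ [(i : ℕ)]) = some (prems.get i, r')) ∧
  (∀ i : ℕ, prems.length ≤ i → f (σ ++ [i]) = none)

/-- Derivation trees (possibly infinite): prefix-closed domain, each non-bud node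
    is the conclusion of a rule whose premises label its children, buds are leaves. -/
structure DTree where
  label : Lbl
  root_def : label [] ≠ none
  prefix_closed : ∀ σ τ : List ℕ, label (σ ++ τ) ≠ none → label σ ≠ none
  wf : ∀ σ S r, label σ = some (S, r) →
    (r = Rule.bud ∧ ∀ i : ℕ, label (σ ++ [i]) = none) ∨
    (r ≠ Rule.bud ∧ ∃ prems, Inf r S prems ∧ childrenOK label σ prems)

/-- `σ` is a bud of the labeling `f`. -/
def budAt (f : Lbl) (σ : List ℕ) : Prop := ∃ S, f σ = some (S, Rule.bud)

/-- `σ` is an inner node of `f` labeled with the sequent `S`. -/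
def innerWith (f : Lbl) (σ : List ℕ) (S : Seq) : Prop :=
  ∃ r, f σ = some (S, r) ∧ r ≠ Rule.bud

/-- A pre-proof: a finite derivation tree together with a function assigning to
    each bud a companion, i.e. an inner node labeled with the same sequent. -/
structure PreProof where
  D : DTree
  fin : {σ : List ℕ | D.label σ ≠ none}.Finite
  C : List ℕ → List ℕ
  comp : ∀ σ S, D.label σ = some (S, Rule.bud) → innerWith D.label (C σ) S

/-- Cycle-normality: every companion is an ancestor of its bud. -/
def PreProof.CycleNormal (P : PreProof) : Prop :=
  ∀ σ S, P.D.label σ = some (S, Rule.bud) → P.C σ <+: σ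

/-- `T` is the tree-unfolding of the pre-proof `P`: it agrees with `P.D` on
    non-bud nodes, below a bud it continues as below the bud's companion, and it
    is empty on nodes not in `P.D` having no bud prefix. -/
def IsUnfolding (P : PreProof) (T : Lbl) : Prop :=
  (∀ σ, P.D.label σ ≠ none → ¬ budAt P.D.label σ → T σ = P.D.label σ) ∧
  (∀ σ₁ σ₂ : List ℕ, budAt P.D.label σ₁ → T (σ₁ ++ σ₂) = T (P.C σ₁ ++ σ₂)) ∧
  (∀ σ, P.D.label σ = none → (∀ σ₁, σ₁ <+: σ → ¬ budAt P.D.label σ₁) → T σ = none)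

/-- An infinite path in the labeling `f`. -/
def IsInfPath (f : Lbl) (p : ℕ → List ℕ) : Prop :=
  (∀ i, f (p i) ≠ none) ∧ (∀ i, ∃ n : ℕ, p (i + 1) = p i ++ [n])

/-- Atomic formulas with an inductive predicate. -/
def isIndAtom (φ : Fm) : Prop :=
  (∃ a b c, φ = Fm.add1 a b c) ∨ (∃ a b c, φ = Fm.add2 a b c)

/-- A progressing trace step: the traced formula is the principal formula of a
    case rule and its successor (in the corresponding case distinction, child `j`)
    is a case-descendant. -/
def progStep : Rule → ℕ → Fm → Fm → Prop := fun r j τ τ' =>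
  match r with
  | .caseAdd1 a b c x y z =>
      τ = Fm.add1 a b c ∧ j = 1 ∧ τ' = Fm.add1 (.var x) (.var y) (.var z)
  | .caseAdd2 a b c x y z =>
      τ = Fm.add2 a b c ∧ j = 1 ∧ τ' = Fm.add2 (.var x) (.s (.var y)) (.var z)
  | _ => False

/-- The trace connection relation between the traced formula at a conclusion of a
    rule `r` and the traced formula at its `j`-th premise. -/
def connStep : Rule → ℕ → Fm → Fm → Prop := fun r j τ τ' =>
  match r with
  | .subst θ => τ = Fm.subst θ τ'
  | .eqL v1 v2 t u =>
      ∃ F : Fm, τ = Fm.subst (sub2 v1 v2 t u) F ∧ τ' = Fm.subst (sub2 v1 v2 u t) F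
  | .eqLa v1 v2 t u =>
      ∃ F : Fm, τ = Fm.subst (sub2 v1 v2 t u) F ∧ τ' = Fm.subst (sub2 v1 v2 u t) F
  | .caseAdd1 a b c x y z => τ' = τ ∨ progStep (.caseAdd1 a b c x y z) j τ τ'
  | .caseAdd2 a b c x y z => τ' = τ ∨ progStep (.caseAdd2 a b c x y z) j τ τ'
  | _ => τ' = τ

/-- `τ` is a trace following the tail from `k` of the path `p` in `f`. -/
def IsTraceFrom (f : Lbl) (p : ℕ → List ℕ) (k : ℕ) (τ : ℕ → Fm) : Prop :=
  ∀ i, k ≤ i →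
    ∃ (S : Seq) (r : Rule) (j : ℕ), f (p i) = some (S, r) ∧ τ i ∈ S.ant ∧ isIndAtom (τ i) ∧
      p (i + 1) = p i ++ [j] ∧ connStep r j (τ i) (τ (i + 1))

/-- The trace `τ` progresses at position `i` of the path `p`. -/
def progAt (f : Lbl) (p : ℕ → List ℕ) (τ : ℕ → Fm) (i : ℕ) : Prop :=
  ∃ (S : Seq) (r : Rule) (j : ℕ), f (p i) = some (S, r) ∧ p (i + 1) = p i ++ [j] ∧
    progStep r j (τ i) (τ (i + 1))

/-- The global trace condition for a (possibly infinite) labeling `f`. -/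
def GTC (f : Lbl) : Prop :=
  ∀ p : ℕ → List ℕ, IsInfPath f p →
    ∃ (k : ℕ) (τ : ℕ → Fm), IsTraceFrom f p k τ ∧
      ∀ n : ℕ, ∃ i, n ≤ i ∧ k ≤ i ∧ progAt f p τ i

/-- A pre-proof is a proof when its tree-unfolding satisfies the
    global trace condition. -/
def PreProof.IsProof (P : PreProof) : Prop := ∃ T : Lbl, IsUnfolding P T ∧ GTC T

/-- Some rule satisfying `Q` occurs in the labeling `f`. -/
def usesRule (f : Lbl) (Q : Rule → Prop) : Prop := ∃ σ S r, f σ = some (S, r) ∧ Q r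

/-- No occurrence of (Cut). -/
def PreProof.CutFree (P : PreProof) : Prop :=
  ¬ usesRule P.D.label (fun r => ∃ φ, r = Rule.cut φ)

/-- No occurrence of (= L_a): the pre-proof is a `CLKID^ω` pre-proof. -/
def PreProof.NoEqLa (P : PreProof) : Prop :=
  ¬ usesRule P.D.label (fun r => ∃ v1 v2 t u, r = Rule.eqLa v1 v2 t u)

/-- No occurrence of (= L): the pre-proof is a `CLKID^ω_a` pre-proof. -/
def PreProof.NoEqL (P : PreProof) : Prop :=
  ¬ usesRule P.D.label (fun r => ∃ v1 v2 t u, r = Rule.eqL v1 v2 t u)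

/-- The conclusion of the pre-proof is the sequent `S`. -/
def PreProof.Concl (P : PreProof) (S : Seq) : Prop := ∃ r, P.D.label [] = some (S, r)

/-- Provability in `CLKID^ω`. -/
def ProvableW (S : Seq) : Prop :=
  ∃ P : PreProof, P.IsProof ∧ P.NoEqLa ∧ P.Concl S

/-- Provability in `CLKID^ω_a`. -/
def ProvableWa (S : Seq) : Prop :=
  ∃ P : PreProof, P.IsProof ∧ P.NoEqL ∧ P.Concl S

/-- Cut-free provability in `CLKID^ω`. -/
def CutFreeProvableW (S : Seq) : Prop :=
  ∃ P : PreProof, P.IsProof ∧ P.CutFree ∧ P.NoEqLa ∧ P.Concl S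

/-- The sequent `Add2(x, y, z) ⊢ Add1(x, y, z)`. -/
def goalSeq : Seq :=
  ⟨{Fm.add2 (Tm.var 0) (Tm.var 1) (Tm.var 2)}, {Fm.add1 (Tm.var 0) (Tm.var 1) (Tm.var 2)}⟩

/-- A cut-free cycle-normal `CLKID^ω_a` proof of `Add2(x,y,z) ⊢ Add1(x,y,z)`. -/
def IsCNProofOfGoal (P : PreProof) : Prop :=
  P.IsProof ∧ P.CutFree ∧ P.NoEqL ∧ P.CycleNormal ∧ P.Concl goalSeq

/-- The index of an `Add2` atom with second argument `b` in the sequent `S` is `⊥`. -/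
def IndexBot (S : Seq) (b : Tm) : Prop :=
  ∀ a' b' c', Fm.add1 a' b' c' ∈ S.suc → ¬ DepTm (antSet S) b b'

/-- `σ` is a switching point of `f`: the conclusion of a `(Case Add2)` rule whose
    principal formula has index `⊥`. -/
def SwitchingPoint (f : Lbl) (σ : List ℕ) : Prop :=
  ∃ S a b c x y z, f σ = some (S, Rule.caseAdd2 a b c x y z) ∧ IndexBot S b

/-- `σ` is the conclusion of a `(Case Add2)` rule in `f`. -/
def CaseAdd2At (f : Lbl) (σ : List ℕ) : Prop :=
  ∃ S a b c x y z, f σ = some (S, Rule.caseAdd2 a b c x y z)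

/-- The node `σ` of `f` is labeled with an index sequent. -/
def IndexSequentAt (f : Lbl) (σ : List ℕ) : Prop :=
  ∃ S r, f σ = some (S, r) ∧ IndexSequent S

/-- A finite index path `p 0, …, p N` in `f`:  its first sequent is an index
    sequent, and a step to the left premise (child `0`) of a `(Case Add2)` rule
    only happens at switching points. -/
def IsIndexPathUpTo (f : Lbl) (p : ℕ → List ℕ) (N : ℕ) : Prop :=
  (∀ i, i ≤ N → f (p i) ≠ none) ∧
  (∀ i, i < N → ∃ n : ℕ, p (i + 1) = p i ++ [n]) ∧
  IndexSequentAt f (p 0) ∧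
  (∀ i, i < N → CaseAdd2At f (p i) → p (i + 1) = p i ++ [0] → SwitchingPoint f (p i))

/-- An infinite index path in `f`. -/
def IsInfIndexPath (f : Lbl) (p : ℕ → List ℕ) : Prop :=
  IsInfPath f p ∧
  IndexSequentAt f (p 0) ∧
  (∀ i, CaseAdd2At f (p i) → p (i + 1) = p i ++ [0] → SwitchingPoint f (p i))

/-- The child index chosen by the rightmost path: the right assumption of
    `(Case Add2)`, the unique premise otherwise. -/
def rightIdx : Rule → ℕ := fun r =>
  match r with
  | .caseAdd2 _ _ _ _ _ _ => 1
  | _ => 0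

/-- One step of the rightmost path in `f`. -/
def RightStep (f : Lbl) (σ σ' : List ℕ) : Prop :=
  ∃ S r, f σ = some (S, r) ∧ σ' = σ ++ [rightIdx r] ∧ f σ' ≠ none

/-- `A(Γ ⊢ Δ)` of Lemma `abc_relations`. -/
def Aset (S : Seq) : Set Tm :=
  {a | (∃ b c, Fm.add2 a b c ∈ S.ant) ∨ (∃ b c, Fm.add1 a b c ∈ S.suc) ∨ a = Tm.zero}

/-- `BC(Γ ⊢ Δ)` of Lemma `abc_relations`. -/
def BCset (S : Seq) : Set Tm :=
  {t | (∃ a c, Fm.add2 a t c ∈ S.ant) ∨ (∃ a b, Fm.add2 a b t ∈ S.ant) ∨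
       (∃ a c, Fm.add1 a t c ∈ S.suc) ∨ (∃ a b, Fm.add1 a b t ∈ S.suc)}

/-- The rules that can occur in a cut-free cycle-normal `CLKID^ω_a` proof of
    `Add2(x,y,z) ⊢ Add1(x,y,z)` (plus bud labels). -/
def allowedRule (r : Rule) : Prop :=
  r = Rule.bud ∨ r = Rule.weak ∨ (∃ θ, r = Rule.subst θ) ∨
  (∃ v1 v2 t u, r = Rule.eqLa v1 v2 t u) ∨
  (∃ a b c x y z, r = Rule.caseAdd2 a b c x y z) ∨
  r = Rule.add1R1 ∨ (∃ a b c, r = Rule.add1R2 a b c)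

/-!
Each equality rule is derivable from the other by a unary gadget. An instance of (= L) is the
instance of (= L_a) with the same data followed by weakening away `t = u`. An instance of (= L_a)
is two instances of (= L): the first has `v1 = v2` in its context, so it keeps the equation, as
`u = t`; the second, on fresh variables, turns `u = t` back into `t = u`.

To replace the instances of a rule inside a cyclic proof, subdivide every edge of the derivation
tree: an instance of the rule becomes its gadget, every other edge gets a weakening that changes
nothing. Buds keep their companions, the unfolding of the new pre-proof is the subdivision of the
old unfolding, and an infinite path in it is an old path with every edge subdivided. A trace
therefore lifts by passing through the intermediate sequents, and it progresses as often as
before, because unary rules never progress.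
-/

theorem Inf.ne_bud {r : Rule} {S : Seq} {L : List Seq} (h : Inf r S L) : r ≠ .bud := by
  cases h <;> nofun

theorem Inf.not_progStep {r : Rule} {S P : Seq} (h : Inf r S [P]) (j : ℕ) (τ τ' : Fm) :
    ¬ progStep r j τ τ' := by
  cases h <;> simp [progStep]

theorem childrenOK_singleton {f : Lbl} {σ : List ℕ} {P : Seq} {r : Rule}
    (h₀ : f (σ ++ [0]) = some (P, r)) (h : ∀ i, i ≠ 0 → f (σ ++ [i]) = none) :
    childrenOK f σ [P] := by
  refine ⟨fun ⟨i, hi⟩ => ?_, fun i hi => h i (by simp at hi; omega)⟩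
  obtain rfl : i = 0 := by simpa using hi
  exact ⟨r, h₀⟩

theorem DTree.label_append_eq_none_of_bud (D : DTree) {σ : List ℕ} {S : Seq}
    (h : D.label σ = some (S, .bud)) (i : ℕ) : D.label (σ ++ [i]) = none := by
  rcases D.wf σ S .bud h with ⟨-, h⟩ | ⟨hne, -⟩
  · exact h i
  · exact absurd rfl hne

theorem DTree.not_budAt_of_prefix (D : DTree) {σ π : List ℕ} (h : D.label σ ≠ none)
    (hπ : π <+: σ) (hne : π ≠ σ) : ¬ budAt D.label π := by
  rintro ⟨S, hS⟩
  obtain ⟨_ | ⟨i, ρ⟩, rfl⟩ := hπ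
  · simp at hne
  · exact D.prefix_closed (π ++ [i]) ρ (by simpa using h) (D.label_append_eq_none_of_bud hS i)

theorem DTree.forall_prefix_not_budAt (D : DTree) {σ : List ℕ} (h : D.label σ ≠ none)
    (hb : ¬ budAt D.label σ) (π : List ℕ) (hπ : π <+: σ) : ¬ budAt D.label π := by
  by_cases hπσ : π = σ
  · exact hπσ ▸ hb
  · exact D.not_budAt_of_prefix h hπ hπσ

def seqAt (f : Lbl) (σ : List ℕ) : Option Seq := (f σ).map Prod.fst

theorem seqAt_eq_some {f : Lbl} {σ : List ℕ} {P : Seq} :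
    seqAt f σ = some P ↔ ∃ r, f σ = some (P, r) := by
  rcases hf : f σ with _ | ⟨P', r⟩ <;> simp [seqAt, hf]

namespace IsUnfolding

variable {P : PreProof} {T : Lbl}

theorem eq_of_ne_bud (hT : IsUnfolding P T) {σ : List ℕ} {S : Seq} {r : Rule}
    (h : P.D.label σ = some (S, r)) (hr : r ≠ .bud) : T σ = some (S, r) := by
  rw [hT.1 σ (by simp [h]) (fun ⟨S', h'⟩ => hr (by simp_all)), h]

theorem seqAt_child (hT : IsUnfolding P T) {σ : List ℕ} (hσ : P.D.label σ ≠ none)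
    (hb : ¬ budAt P.D.label σ) (j : ℕ) :
    seqAt T (σ ++ [j]) = seqAt P.D.label (σ ++ [j]) := by
  rcases hc : P.D.label (σ ++ [j]) with _ | ⟨Q, r⟩
  · rw [seqAt, seqAt, hc, hT.2.2 _ hc fun π hπ => ?_]
    rcases List.prefix_concat_iff.mp hπ with rfl | hπ
    · exact fun ⟨_, h⟩ => by simp [hc] at h
    · exact P.D.forall_prefix_not_budAt hσ hb π hπ
  · by_cases hr : r = .bud
    · subst hr
      obtain ⟨rc, hl, hrc⟩ := P.comp _ Q hc
      have h := hT.2.1 (σ ++ [j]) [] ⟨Q, hc⟩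
      simp only [List.append_nil] at h
      simp [seqAt, h, hT.eq_of_ne_bud hl hrc, hc]
    · simp [seqAt, hT.eq_of_ne_bud hc hr, hc]

end IsUnfolding

/-- `r₁` from `S` to `M` followed by `r₂` from `M` to `P` can replace the step `r` from `S` to
`P`: it avoids `bad`, and every trace along `r` can be routed through `M`. -/
structure Splits (bad : Rule → Prop) (r : Rule) (S P : Seq) (r₁ : Rule) (M : Seq) (r₂ : Rule) :
    Prop where
  inf₁ : Inf r₁ S [M]
  inf₂ : Inf r₂ M [P]
  good₁ : ¬ bad r₁
  good₂ : ¬ bad r₂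
  trace : ∀ τ τ', τ ∈ S.ant → isIndAtom τ → τ' ∈ P.ant → isIndAtom τ' → connStep r 0 τ τ' →
    ∃ μ ∈ M.ant, isIndAtom μ ∧ connStep r₁ 0 τ μ ∧ connStep r₂ 0 μ τ'

structure Splitting (bad : Rule → Prop) where
  top : Rule → Seq → Seq → Rule
  mid : Rule → Seq → Seq → Seq
  bot : Rule → Seq → Seq → Rule
  splits : ∀ r S P, bad r → Inf r S [P] → Splits bad r S P (top r S P) (mid r S P) (bot r S P)

/-- The address, in the tree with every edge subdivided, of the node `σ` of the original tree. -/
def subdivAddr (σ : List ℕ) : List ℕ := σ.flatMap fun i => [i, 0]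

def origAddr : List ℕ → List ℕ
  | i :: _ :: τ => i :: origAddr τ
  | _ => []

theorem subdivAddr_cons (i : ℕ) (σ : List ℕ) :
    subdivAddr (i :: σ) = i :: 0 :: subdivAddr σ :=
  rfl

theorem subdivAddr_append (σ ρ : List ℕ) :
    subdivAddr (σ ++ ρ) = subdivAddr σ ++ subdivAddr ρ := by
  simp [subdivAddr]

theorem subdivAddr_snoc (σ : List ℕ) (j : ℕ) :
    subdivAddr (σ ++ [j]) = subdivAddr σ ++ [j, 0] := by
  simp [subdivAddr]

@[simp] theorem origAddr_subdivAddr (σ : List ℕ) : origAddr (subdivAddr σ) = σ := by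
  induction σ with
  | nil => rfl
  | cons i σ ih => rw [subdivAddr_cons, origAddr, ih]

theorem subdivAddr_prefix {π σ : List ℕ} (h : π <+: σ) : subdivAddr π <+: subdivAddr σ := by
  obtain ⟨ρ, rfl⟩ := h
  exact ⟨subdivAddr ρ, (subdivAddr_append π ρ).symm⟩

theorem subdivAddr_cases : ∀ τ : List ℕ,
    (∃ σ, τ = subdivAddr σ) ∨ (∃ σ j, τ = subdivAddr σ ++ [j]) ∨
      ∃ σ j m ρ, m ≠ 0 ∧ τ = subdivAddr σ ++ j :: m :: ρ
  | [] => .inl ⟨[], rfl⟩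
  | [j] => .inr (.inl ⟨[], j, rfl⟩)
  | j :: 0 :: τ => by
    rcases subdivAddr_cases τ with ⟨σ, rfl⟩ | ⟨σ, k, rfl⟩ | ⟨σ, k, m, ρ, hm, rfl⟩
    · exact .inl ⟨j :: σ, rfl⟩
    · exact .inr (.inl ⟨j :: σ, k, rfl⟩)
    · exact .inr (.inr ⟨j :: σ, k, m, ρ, hm, rfl⟩)
  | j :: (m + 1) :: τ => .inr (.inr ⟨[], j, m + 1, τ, m.succ_ne_zero, rfl⟩)

open Classical in
/-- The instance of a bad unary rule at `σ`, if there is one: its conclusion, rule and premise. -/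
noncomputable def splitAt (bad : Rule → Prop) (f : Lbl) (σ : List ℕ) :
    Option (Seq × Rule × Seq) :=
  match f σ, seqAt f (σ ++ [0]) with
  | some (S, r), some P => if bad r ∧ Inf r S [P] then some (S, r, P) else none
  | _, _ => none

theorem splitAt_eq_some {bad : Rule → Prop} {f : Lbl} {σ : List ℕ} {S : Seq} {r : Rule}
    {P : Seq} : splitAt bad f σ = some (S, r, P) ↔
      f σ = some (S, r) ∧ seqAt f (σ ++ [0]) = some P ∧ bad r ∧ Inf r S [P] := by
  unfold splitAt
  rcases f σ with _ | ⟨S', r'⟩ <;> rcases seqAt f (σ ++ [0]) with _ | P' <;> simp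
  constructor
  · rintro ⟨h, rfl, rfl, rfl⟩
    exact ⟨⟨rfl, rfl⟩, rfl, h⟩
  · rintro ⟨⟨rfl, rfl⟩, rfl, h⟩
    exact ⟨h, rfl, rfl, rfl⟩

theorem DTree.exists_splitAt_eq_some {bad : Rule → Prop}
    (hunary : ∀ r S L, bad r → Inf r S L → ∃ P, L = [P]) (D : DTree) {σ : List ℕ} {S : Seq}
    {r : Rule} (h : D.label σ = some (S, r)) (hb : bad r) (hr : r ≠ .bud) :
    ∃ P, splitAt bad D.label σ = some (S, r, P) ∧ ∀ i, i ≠ 0 → D.label (σ ++ [i]) = none := by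
  rcases D.wf σ S r h with ⟨hr', -⟩ | ⟨-, L, hI, hL⟩
  · exact absurd hr' hr
  obtain ⟨P, rfl⟩ := hunary r S L hb hI
  obtain ⟨r₀, h₀⟩ := hL.1 ⟨0, by simp⟩
  refine ⟨P, splitAt_eq_some.mpr ⟨h, seqAt_eq_some.mpr ⟨r₀, h₀⟩, hb, hI⟩, fun i hi => ?_⟩
  exact hL.2 i (by simp; omega)

namespace Splitting

variable {bad : Rule → Prop} (G : Splitting bad)

noncomputable def nodeLabel (f : Lbl) (σ : List ℕ) : Option (Seq × Rule) :=
  match splitAt bad f σ with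
  | some (S, r, P) => some (S, G.top r S P)
  | none => f σ

noncomputable def edgeLabel (f : Lbl) (σ : List ℕ) (j : ℕ) : Option (Seq × Rule) :=
  match splitAt bad f σ with
  | some (S, r, P) => if j = 0 then some (G.mid r S P, G.bot r S P) else none
  | none => (seqAt f (σ ++ [j])).map (·, .weak)

/-- The labelling `f` with every edge subdivided: the node `σ` moves to `subdivAddr σ`, and the
edge to its `j`-th child gets a middle node, at `subdivAddr σ ++ [j]`. A bad unary step becomes
the two steps of `G`, any other edge a weakening that changes nothing. -/
noncomputable def subdivide (f : Lbl) : Lbl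
  | [] => G.nodeLabel f []
  | [j] => G.edgeLabel f [] j
  | j :: 0 :: τ => subdivide (fun χ => f (j :: χ)) τ
  | _ :: (_ + 1) :: _ => none

variable {G} {f g : Lbl} {σ : List ℕ}

theorem subdivide_subdivAddr_append (f : Lbl) (σ τ : List ℕ) :
    G.subdivide f (subdivAddr σ ++ τ) = G.subdivide (fun χ => f (σ ++ χ)) τ := by
  induction σ generalizing f with
  | nil => rfl
  | cons i σ ih => exact ih fun χ => f (i :: χ)

@[simp] theorem subdivide_subdivAddr (f : Lbl) (σ : List ℕ) :
    G.subdivide f (subdivAddr σ) = G.nodeLabel f σ := by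
  simpa [subdivide, nodeLabel, splitAt, seqAt] using
    subdivide_subdivAddr_append (G := G) f σ []

@[simp] theorem subdivide_subdivAddr_snoc (f : Lbl) (σ : List ℕ) (j : ℕ) :
    G.subdivide f (subdivAddr σ ++ [j]) = G.edgeLabel f σ j := by
  rw [subdivide_subdivAddr_append]
  simp [subdivide, edgeLabel, splitAt, seqAt]

theorem subdivide_eq_none (f : Lbl) (σ : List ℕ) (j : ℕ) {m : ℕ} (hm : m ≠ 0) (ρ : List ℕ) :
    G.subdivide f (subdivAddr σ ++ j :: m :: ρ) = none := by
  obtain ⟨m, rfl⟩ := Nat.exists_eq_succ_of_ne_zero hm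
  rw [subdivide_subdivAddr_append]
  rfl

theorem nodeLabel_of_splitAt {S : Seq} {r : Rule} {P : Seq}
    (h : splitAt bad f σ = some (S, r, P)) : G.nodeLabel f σ = some (S, G.top r S P) := by
  simp [nodeLabel, h]

theorem nodeLabel_of_splitAt_eq_none (h : splitAt bad f σ = none) :
    G.nodeLabel f σ = f σ := by
  simp [nodeLabel, h]

theorem edgeLabel_of_splitAt {S : Seq} {r : Rule} {P : Seq}
    (h : splitAt bad f σ = some (S, r, P)) (j : ℕ) :
    G.edgeLabel f σ j = if j = 0 then some (G.mid r S P, G.bot r S P) else none := by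
  simp [edgeLabel, h]

theorem edgeLabel_of_splitAt_eq_none (h : splitAt bad f σ = none) (j : ℕ) :
    G.edgeLabel f σ j = (seqAt f (σ ++ [j])).map (·, .weak) := by
  simp [edgeLabel, h]

theorem exists_nodeLabel_eq {S : Seq} {r : Rule} (h : f σ = some (S, r)) :
    ∃ r', G.nodeLabel f σ = some (S, r') := by
  rcases hs : splitAt bad f σ with _ | ⟨S', r', P⟩
  · exact ⟨r, by rw [nodeLabel_of_splitAt_eq_none hs, h]⟩
  · obtain ⟨h', -⟩ := splitAt_eq_some.mp hs
    obtain rfl : S' = S := by simp_all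
    exact ⟨_, nodeLabel_of_splitAt hs⟩

theorem nodeLabel_eq_none : G.nodeLabel f σ = none ↔ f σ = none := by
  rcases hf : f σ with _ | ⟨S, r⟩
  · simp [nodeLabel, splitAt, hf]
  · obtain ⟨r', h⟩ := exists_nodeLabel_eq (G := G) hf
    simp [h]

theorem nodeLabel_eq_bud {S : Seq} :
    G.nodeLabel f σ = some (S, .bud) ↔ f σ = some (S, .bud) := by
  rcases hs : splitAt bad f σ with _ | ⟨S', r, P⟩
  · rw [nodeLabel_of_splitAt_eq_none hs]
  · obtain ⟨h, -, hb, hI⟩ := splitAt_eq_some.mp hs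
    rw [nodeLabel_of_splitAt hs, h]
    simp [(G.splits r S' P hb hI).inf₁.ne_bud, hI.ne_bud]

theorem ne_none_of_edgeLabel_ne_none {j : ℕ} (h : G.edgeLabel f σ j ≠ none) :
    f (σ ++ [j]) ≠ none := by
  rcases hs : splitAt bad f σ with _ | ⟨S, r, P⟩
  · rw [edgeLabel_of_splitAt_eq_none hs] at h
    simpa [seqAt] using h
  · rw [edgeLabel_of_splitAt hs] at h
    obtain ⟨-, h₀, -⟩ := splitAt_eq_some.mp hs
    split_ifs at h with hj
    · subst hj
      obtain ⟨r', h'⟩ := seqAt_eq_some.mp h₀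
      simp [h']
    · exact absurd rfl h

theorem edgeLabel_eq_none {j : ℕ} (h : f (σ ++ [j]) = none) : G.edgeLabel f σ j = none := by
  by_contra h'
  exact ne_none_of_edgeLabel_ne_none h' h

theorem exists_child_of_edgeLabel_eq_some {j : ℕ} {S : Seq} {r : Rule}
    (h : G.edgeLabel f σ j = some (S, r)) :
    ∃ P r', f (σ ++ [j]) = some (P, r') ∧ Inf r S [P] := by
  rcases hs : splitAt bad f σ with _ | ⟨S₀, r₀, P⟩
  · rw [edgeLabel_of_splitAt_eq_none hs] at h
    rcases hc : f (σ ++ [j]) with _ | ⟨P, r'⟩ <;> simp [seqAt, hc] at h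
    obtain ⟨rfl, rfl⟩ := h
    exact ⟨_, _, rfl, Inf.weak subset_rfl subset_rfl⟩
  · obtain ⟨-, h₀, hb, hI⟩ := splitAt_eq_some.mp hs
    rw [edgeLabel_of_splitAt hs] at h
    split_ifs at h with hj
    subst hj
    obtain ⟨rfl, rfl⟩ : G.mid r₀ S₀ P = S ∧ G.bot r₀ S₀ P = r := by simpa using h
    obtain ⟨r', h'⟩ := seqAt_eq_some.mp h₀
    exact ⟨P, r', h', (G.splits r₀ S₀ P hb hI).inf₂⟩

theorem edgeLabel_ne_bud {S : Seq} (j : ℕ) : G.edgeLabel f σ j ≠ some (S, .bud) := fun h => by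
  obtain ⟨_, _, -, hI⟩ := exists_child_of_edgeLabel_eq_some h
  exact hI.ne_bud rfl

theorem budAt_subdivide {τ : List ℕ} :
    budAt (G.subdivide f) τ ↔ ∃ σ, τ = subdivAddr σ ∧ budAt f σ := by
  constructor
  · rintro ⟨S, hS⟩
    rcases subdivAddr_cases τ with ⟨σ, rfl⟩ | ⟨σ, j, rfl⟩ | ⟨σ, j, m, ρ, hm, rfl⟩
    · exact ⟨σ, rfl, S, nodeLabel_eq_bud.mp (by simpa using hS)⟩
    · simp [edgeLabel_ne_bud] at hS
    · simp [subdivide_eq_none _ _ _ hm] at hS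
  · rintro ⟨σ, rfl, S, hS⟩
    exact ⟨S, by simpa using nodeLabel_eq_bud.mpr hS⟩

theorem innerWith_subdivide {S : Seq} (h : innerWith f σ S) :
    innerWith (G.subdivide f) (subdivAddr σ) S := by
  obtain ⟨r, hr, hne⟩ := h
  obtain ⟨r', hn⟩ := exists_nodeLabel_eq (G := G) hr
  refine ⟨r', by simpa using hn, fun hb => hne ?_⟩
  have h := nodeLabel_eq_bud.mp (hb ▸ hn)
  rw [hr] at h
  simpa using h

theorem subdivide_congr (h₀ : f σ = g σ) (h₁ : ∀ j, seqAt f (σ ++ [j]) = seqAt g (σ ++ [j])) :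
    G.subdivide f (subdivAddr σ) = G.subdivide g (subdivAddr σ) ∧
      ∀ j, G.subdivide f (subdivAddr σ ++ [j]) = G.subdivide g (subdivAddr σ ++ [j]) := by
  simp [nodeLabel, edgeLabel, splitAt, h₀, h₁]

theorem finite_subdivide (hf : {σ | f σ ≠ none}.Finite) :
    {τ | G.subdivide f τ ≠ none}.Finite := by
  refine ((hf.image subdivAddr).union ((hf.image subdivAddr).image List.dropLast)).subset
    fun τ hτ => ?_
  rcases subdivAddr_cases τ with ⟨σ, rfl⟩ | ⟨σ, j, rfl⟩ | ⟨σ, j, m, ρ, hm, rfl⟩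
  · exact .inl ⟨σ, by simpa [nodeLabel_eq_none] using hτ, rfl⟩
  · refine .inr ⟨subdivAddr (σ ++ [j]), ⟨σ ++ [j], ?_, rfl⟩, by simp [subdivAddr_snoc]⟩
    exact ne_none_of_edgeLabel_ne_none (by simpa using hτ)
  · simp [subdivide_eq_none _ _ _ hm] at hτ

section Tree

variable (D : DTree)

theorem subdivide_wf_node {σ : List ℕ} {S : Seq} {r : Rule}
    (h : G.nodeLabel D.label σ = some (S, r)) :
    (r = .bud ∧ ∀ i, G.edgeLabel D.label σ i = none) ∨
      (r ≠ .bud ∧ ∃ L, Inf r S L ∧ childrenOK (G.subdivide D.label) (subdivAddr σ) L) := by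
  rcases hs : splitAt bad D.label σ with _ | ⟨S₀, r₀, P⟩
  · rw [nodeLabel_of_splitAt_eq_none hs] at h
    rcases D.wf σ S r h with ⟨rfl, hc⟩ | ⟨hr, L, hI, hL⟩
    · exact .inl ⟨rfl, fun i => edgeLabel_eq_none (hc i)⟩
    refine .inr ⟨hr, L, hI, fun i => ?_, fun i hi => ?_⟩
    · obtain ⟨r', hc⟩ := hL.1 i
      exact ⟨.weak, by simp [edgeLabel_of_splitAt_eq_none hs, seqAt, hc]⟩
    · simp [edgeLabel_eq_none (hL.2 i hi)]
  · obtain ⟨-, -, hb, hI⟩ := splitAt_eq_some.mp hs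
    rw [nodeLabel_of_splitAt hs] at h
    obtain ⟨rfl, rfl⟩ : S₀ = S ∧ G.top r₀ S₀ P = r := by simpa using h
    have hsp := G.splits r₀ S₀ P hb hI
    refine .inr ⟨hsp.inf₁.ne_bud, _, hsp.inf₁, childrenOK_singleton (r := G.bot r₀ S₀ P) ?_ ?_⟩
    · simp [edgeLabel_of_splitAt hs]
    · intro i hi
      simp [edgeLabel_of_splitAt hs, hi]

theorem subdivide_wf_edge {σ : List ℕ} {j : ℕ} {S : Seq} {r : Rule}
    (h : G.edgeLabel D.label σ j = some (S, r)) :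
    r ≠ .bud ∧ ∃ L, Inf r S L ∧ childrenOK (G.subdivide D.label) (subdivAddr σ ++ [j]) L := by
  obtain ⟨P, r', hc, hI⟩ := exists_child_of_edgeLabel_eq_some h
  obtain ⟨r'', hn⟩ := exists_nodeLabel_eq (G := G) hc
  refine ⟨hI.ne_bud, [P], hI, childrenOK_singleton (r := r'') ?_ fun i hi => ?_⟩
  · simpa [← subdivAddr_snoc] using hn
  · simpa using subdivide_eq_none D.label σ j hi []

theorem subdivide_wf (τ : List ℕ) (S : Seq) (r : Rule)
    (h : G.subdivide D.label τ = some (S, r)) :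
    (r = .bud ∧ ∀ i, G.subdivide D.label (τ ++ [i]) = none) ∨
      (r ≠ .bud ∧ ∃ L, Inf r S L ∧ childrenOK (G.subdivide D.label) τ L) := by
  rcases subdivAddr_cases τ with ⟨σ, rfl⟩ | ⟨σ, j, rfl⟩ | ⟨σ, j, m, ρ, hm, rfl⟩
  · simpa using subdivide_wf_node D (by simpa using h)
  · exact .inr (subdivide_wf_edge D (by simpa using h))
  · simp [subdivide_eq_none _ _ _ hm] at h

theorem not_bad_of_edgeLabel (hweak : ¬ bad .weak) {f : Lbl} {σ : List ℕ} {j : ℕ} {S : Seq}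
    {r : Rule} (h : G.edgeLabel f σ j = some (S, r)) : ¬ bad r := by
  rcases hs : splitAt bad f σ with _ | ⟨S₀, r₀, P⟩
  · rw [edgeLabel_of_splitAt_eq_none hs] at h
    simp only [Option.map_eq_some_iff, Prod.mk.injEq] at h
    obtain ⟨_, -, -, rfl⟩ := h
    exact hweak
  · obtain ⟨-, -, hb, hI⟩ := splitAt_eq_some.mp hs
    rw [edgeLabel_of_splitAt hs] at h
    split_ifs at h
    obtain ⟨-, rfl⟩ := Prod.mk.inj (Option.some.inj h)
    exact (G.splits r₀ S₀ P hb hI).good₂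

variable (hunary : ∀ r S L, bad r → Inf r S L → ∃ P, L = [P])
include hunary

theorem subdivide_snoc_ne_none {τ : List ℕ} {n : ℕ}
    (h : G.subdivide D.label (τ ++ [n]) ≠ none) : G.subdivide D.label τ ≠ none := by
  rcases subdivAddr_cases τ with ⟨σ, rfl⟩ | ⟨σ, j, rfl⟩ | ⟨σ, j, m, ρ, hm, rfl⟩
  · rw [subdivide_subdivAddr_snoc] at h
    rw [subdivide_subdivAddr, Ne, nodeLabel_eq_none]
    exact D.prefix_closed σ [n] (ne_none_of_edgeLabel_ne_none h)
  · obtain rfl : n = 0 := by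
      by_contra hn
      exact h (by simpa using subdivide_eq_none D.label σ j hn [])
    rw [List.append_assoc, List.singleton_append, ← subdivAddr_snoc, subdivide_subdivAddr, Ne,
      nodeLabel_eq_none] at h
    obtain ⟨⟨S, r⟩, hc⟩ := Option.ne_none_iff_exists'.mp h
    rw [subdivide_subdivAddr_snoc]
    rcases hs : splitAt bad D.label σ with _ | ⟨S', r', P⟩
    · simp [edgeLabel_of_splitAt_eq_none hs, seqAt, hc]
    · obtain ⟨hσ, -, hb, hI⟩ := splitAt_eq_some.mp hs
      obtain ⟨-, -, hnone⟩ := D.exists_splitAt_eq_some hunary hσ hb hI.ne_bud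
      obtain rfl : j = 0 := by_contra fun hj => h (hnone j hj)
      simp [edgeLabel_of_splitAt hs]
  · simp [subdivide_eq_none _ _ _ hm] at h

theorem subdivide_prefix_closed (σ τ : List ℕ) (h : G.subdivide D.label (σ ++ τ) ≠ none) :
    G.subdivide D.label σ ≠ none := by
  induction τ using List.reverseRecOn with
  | nil => simpa using h
  | append_singleton τ n ih =>
    rw [← List.append_assoc] at h
    exact ih (subdivide_snoc_ne_none D hunary h)

theorem not_bad_of_nodeLabel (hbud : ¬ bad .bud) {σ : List ℕ} {S : Seq} {r : Rule}
    (h : G.nodeLabel D.label σ = some (S, r)) : ¬ bad r := by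
  rcases hs : splitAt bad D.label σ with _ | ⟨S₀, r₀, P⟩
  · rw [nodeLabel_of_splitAt_eq_none hs] at h
    intro hb
    by_cases hr : r = .bud
    · exact hbud (hr ▸ hb)
    · obtain ⟨P, hP, -⟩ := D.exists_splitAt_eq_some hunary h hb hr
      simp [hs] at hP
  · obtain ⟨-, -, hb, hI⟩ := splitAt_eq_some.mp hs
    rw [nodeLabel_of_splitAt hs] at h
    obtain ⟨-, rfl⟩ := Prod.mk.inj (Option.some.inj h)
    exact (G.splits r₀ S₀ P hb hI).good₁

theorem not_usesRule_subdivide (hbud : ¬ bad .bud) (hweak : ¬ bad .weak) :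
    ¬ usesRule (G.subdivide D.label) bad := by
  rintro ⟨τ, S, r, h, hb⟩
  rcases subdivAddr_cases τ with ⟨σ, rfl⟩ | ⟨σ, j, rfl⟩ | ⟨σ, j, m, ρ, hm, rfl⟩
  · exact not_bad_of_nodeLabel D hunary hbud (by simpa using h) hb
  · exact not_bad_of_edgeLabel hweak (by simpa using h) hb
  · simp [subdivide_eq_none _ _ _ hm] at h

variable (G)

noncomputable def subdivideTree : DTree where
  label := G.subdivide D.label
  root_def := by
    change G.subdivide D.label (subdivAddr []) ≠ none
    rw [subdivide_subdivAddr, Ne, nodeLabel_eq_none]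
    exact D.root_def
  prefix_closed := subdivide_prefix_closed D hunary
  wf := subdivide_wf D

noncomputable def subdividePreProof (P : PreProof) : PreProof where
  D := G.subdivideTree P.D hunary
  fin := finite_subdivide P.fin
  C τ := subdivAddr (P.C (origAddr τ))
  comp τ S h := by
    obtain ⟨σ, rfl, -⟩ := budAt_subdivide.mp ⟨S, h⟩
    change G.subdivide P.D.label (subdivAddr σ) = _ at h
    rw [subdivide_subdivAddr, nodeLabel_eq_bud] at h
    rw [origAddr_subdivAddr]
    exact innerWith_subdivide (P.comp σ S h)

end Tree

section Unfolding

variable {P : PreProof} {T : Lbl}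

theorem subdivide_unfolding_eq (hT : IsUnfolding P T) {σ : List ℕ}
    (hσ : ∀ π, π <+: σ → ¬ budAt P.D.label π) :
    G.subdivide T (subdivAddr σ) = G.subdivide P.D.label (subdivAddr σ) ∧
      ∀ j, G.subdivide T (subdivAddr σ ++ [j]) = G.subdivide P.D.label (subdivAddr σ ++ [j]) := by
  by_cases hD : P.D.label σ = none
  · have hc (j : ℕ) : P.D.label (σ ++ [j]) = none := by
      by_contra h
      exact P.D.prefix_closed σ [j] h hD
    have hTc (j : ℕ) : T (σ ++ [j]) = none := hT.2.2 _ (hc j) fun π hπ => by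
      rcases List.prefix_concat_iff.mp hπ with rfl | hπ
      · exact fun ⟨_, h⟩ => by simp [hc j] at h
      · exact hσ π hπ
    simp [edgeLabel_eq_none (hc _), edgeLabel_eq_none (hTc _), nodeLabel_eq_none.mpr hD,
      nodeLabel_eq_none.mpr (hT.2.2 σ hD hσ)]
  · have hb := hσ σ (List.prefix_refl σ)
    exact subdivide_congr (hT.1 σ hD hb) (hT.seqAt_child hD hb)

variable (hunary : ∀ r S L, bad r → Inf r S L → ∃ P, L = [P])

theorem isUnfolding_subdivide (hT : IsUnfolding P T) :
    IsUnfolding (G.subdividePreProof hunary P) (G.subdivide T) := by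
  refine ⟨fun τ hτ hb => ?_, fun τ₁ τ₂ hb => ?_, fun τ hτ hb => ?_⟩
  · change G.subdivide P.D.label τ ≠ none at hτ
    change G.subdivide T τ = G.subdivide P.D.label τ
    rcases subdivAddr_cases τ with ⟨σ, rfl⟩ | ⟨σ, j, rfl⟩ | ⟨σ, j, m, ρ, hm, rfl⟩
    · have hσ : P.D.label σ ≠ none := by simpa [nodeLabel_eq_none] using hτ
      exact (subdivide_unfolding_eq hT (P.D.forall_prefix_not_budAt hσ
        fun h => hb (budAt_subdivide.mpr ⟨σ, rfl, h⟩))).1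
    · have hc : P.D.label (σ ++ [j]) ≠ none := ne_none_of_edgeLabel_ne_none (by simpa using hτ)
      exact (subdivide_unfolding_eq hT (P.D.forall_prefix_not_budAt (P.D.prefix_closed σ [j] hc)
        fun ⟨S, h⟩ => hc (P.D.label_append_eq_none_of_bud h j))).2 j
    · simp [subdivide_eq_none _ _ _ hm]
  · obtain ⟨σ, rfl, hσ⟩ := budAt_subdivide.mp hb
    change G.subdivide T (subdivAddr σ ++ τ₂) =
      G.subdivide T (subdivAddr (P.C (origAddr (subdivAddr σ))) ++ τ₂)
    rw [origAddr_subdivAddr, subdivide_subdivAddr_append, subdivide_subdivAddr_append]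
    exact congrArg (G.subdivide · τ₂) (funext fun χ => hT.2.1 σ χ hσ)
  · have hpre (π : List ℕ) (hπ : subdivAddr π <+: τ) : ¬ budAt P.D.label π :=
      fun h => hb _ hπ (budAt_subdivide.mpr ⟨π, rfl, h⟩)
    change G.subdivide P.D.label τ = none at hτ
    rcases subdivAddr_cases τ with ⟨σ, rfl⟩ | ⟨σ, j, rfl⟩ | ⟨σ, j, m, ρ, hm, rfl⟩
    · rw [(subdivide_unfolding_eq hT fun π hπ => hpre π (subdivAddr_prefix hπ)).1, hτ]
    · rw [(subdivide_unfolding_eq hT fun π hπ =>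
        hpre π ((subdivAddr_prefix hπ).trans (List.prefix_append _ _))).2 j, hτ]
    · simp [subdivide_eq_none _ _ _ hm]

end Unfolding

end Splitting

/-- `IsTraceFrom f p k τ` and `progAt f p τ i` unfold to these predicates on consecutive nodes
of `p`. -/
def TraceStep (f : Lbl) (σ σ' : List ℕ) (τ τ' : Fm) : Prop :=
  ∃ S r j, f σ = some (S, r) ∧ τ ∈ S.ant ∧ isIndAtom τ ∧ σ' = σ ++ [j] ∧ connStep r j τ τ'

def ProgStep (f : Lbl) (σ σ' : List ℕ) (τ τ' : Fm) : Prop :=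
  ∃ S r j, f σ = some (S, r) ∧ σ' = σ ++ [j] ∧ progStep r j τ τ'

def interleave {α : Type*} (i₀ : ℕ) (a b : ℕ → α) (i : ℕ) : α :=
  if (i - i₀) % 2 = 0 then a ((i - i₀) / 2) else b ((i - i₀) / 2)

@[simp] theorem interleave_even {α : Type*} (i₀ : ℕ) (a b : ℕ → α) (j : ℕ) :
    interleave i₀ a b (i₀ + 2 * j) = a j := by
  simp [interleave]

@[simp] theorem interleave_odd {α : Type*} (i₀ : ℕ) (a b : ℕ → α) (j : ℕ) :
    interleave i₀ a b (i₀ + 2 * j + 1) = b j := by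
  simp [interleave, show (i₀ + 2 * j + 1 - i₀) = 2 * j + 1 by omega, Nat.add_mod,
    show (2 * j + 1) / 2 = j by omega]

section Paths

open Splitting

variable {bad : Rule → Prop} {G : Splitting bad} {f : Lbl} {q : ℕ → List ℕ}

theorem IsInfPath.subdivide_succ (hq : IsInfPath (G.subdivide f) q) {i : ℕ} {σ : List ℕ}
    {j : ℕ} (h : q i = subdivAddr σ ++ [j]) : q (i + 1) = subdivAddr (σ ++ [j]) := by
  obtain ⟨m, hm⟩ := hq.2 i
  obtain rfl : m = 0 := by
    by_contra hm0
    exact hq.1 (i + 1) (by simpa [hm, h] using subdivide_eq_none (G := G) f σ j hm0 [])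
  rw [hm, h, subdivAddr_snoc, List.append_assoc, List.singleton_append]

theorem IsInfPath.exists_subdivAddr (hq : IsInfPath (G.subdivide f) q) :
    ∃ (i₀ : ℕ) (p : ℕ → List ℕ) (n : ℕ → ℕ), ∀ j, f (p j) ≠ none ∧ p (j + 1) = p j ++ [n j] ∧
      q (i₀ + 2 * j) = subdivAddr (p j) ∧ q (i₀ + 2 * j + 1) = subdivAddr (p j) ++ [n j] := by
  have hstep {i : ℕ} {σ : List ℕ} (h : q i = subdivAddr σ) :
      ∃ n, q (i + 1) = subdivAddr σ ++ [n] ∧ q (i + 1 + 1) = subdivAddr (σ ++ [n]) := by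
    obtain ⟨n, hn⟩ := hq.2 i
    rw [h] at hn
    exact ⟨n, hn, hq.subdivide_succ hn⟩
  obtain ⟨i₀, σ₀, h₀⟩ : ∃ i₀ σ₀, q i₀ = subdivAddr σ₀ := by
    rcases subdivAddr_cases (q 0) with ⟨σ, h⟩ | ⟨σ, j, h⟩ | ⟨σ, j, m, ρ, hm, h⟩
    · exact ⟨0, σ, h⟩
    · exact ⟨1, _, hq.subdivide_succ h⟩
    · exact absurd (by rw [h, subdivide_eq_none f σ j hm]) (hq.1 0)
  have hnode (j : ℕ) : ∃ σ, q (i₀ + 2 * j) = subdivAddr σ := by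
    induction j with
    | zero => exact ⟨σ₀, h₀⟩
    | succ j ih =>
      obtain ⟨σ, hσ⟩ := ih
      obtain ⟨n, -, hn⟩ := hstep hσ
      exact ⟨σ ++ [n], by rw [← hn]; ring_nf⟩
  choose p hp using hnode
  have hedge (j : ℕ) :
      ∃ n, p (j + 1) = p j ++ [n] ∧ q (i₀ + 2 * j + 1) = subdivAddr (p j) ++ [n] := by
    obtain ⟨n, h₁, h₂⟩ := hstep (hp j)
    refine ⟨n, ?_, h₁⟩
    have h := hp (j + 1)
    rw [show i₀ + 2 * (j + 1) = i₀ + 2 * j + 1 + 1 by ring, h₂] at h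
    simpa using congrArg origAddr h.symm
  choose n hn using hedge
  refine ⟨i₀, p, n, fun j => ⟨?_, (hn j).1, hp j, (hn j).2⟩⟩
  have h := hq.1 (i₀ + 2 * j)
  rwa [hp j, subdivide_subdivAddr, Ne, nodeLabel_eq_none] at h

end Paths

namespace Splitting

variable {bad : Rule → Prop} {G : Splitting bad} {f : Lbl}

theorem exists_traceStep_subdivide {σ : List ℕ} {n : ℕ} {τ τ' : Fm}
    (h : TraceStep f σ (σ ++ [n]) τ τ')
    (h' : ∃ S' r', f (σ ++ [n]) = some (S', r') ∧ τ' ∈ S'.ant ∧ isIndAtom τ')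
    (hne : G.edgeLabel f σ n ≠ none) :
    ∃ μ, TraceStep (G.subdivide f) (subdivAddr σ) (subdivAddr σ ++ [n]) τ μ ∧
      TraceStep (G.subdivide f) (subdivAddr σ ++ [n]) (subdivAddr (σ ++ [n])) μ τ' ∧
      (ProgStep f σ (σ ++ [n]) τ τ' →
        ProgStep (G.subdivide f) (subdivAddr σ) (subdivAddr σ ++ [n]) τ μ) := by
  obtain ⟨S, r, m, hS, hmem, hind, hm, hconn⟩ := h
  obtain rfl : m = n := by simpa using hm.symm
  obtain ⟨S', r', hS', hmem', hind'⟩ := h'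
  have hmid : subdivAddr (σ ++ [m]) = subdivAddr σ ++ [m] ++ [0] := by simp [subdivAddr_snoc]
  rcases hs : splitAt bad f σ with _ | ⟨S₀, r₀, P⟩
  · have hnode : G.nodeLabel f σ = some (S, r) := by rw [nodeLabel_of_splitAt_eq_none hs, hS]
    refine ⟨τ', ⟨S, r, m, by simpa using hnode, hmem, hind, rfl, hconn⟩,
      ⟨S', .weak, 0, by simp [edgeLabel_of_splitAt_eq_none hs, seqAt, hS'], hmem', hind', hmid,
        rfl⟩, fun ⟨S₁, r₁, m₁, h₁, h₂, h₃⟩ => ⟨S₁, r₁, m₁, ?_, by simpa using h₂, h₃⟩⟩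
    simpa [hnode, hS] using h₁
  · obtain ⟨hS₀, h₀, hb, hI⟩ := splitAt_eq_some.mp hs
    obtain ⟨rfl, rfl⟩ : S₀ = S ∧ r₀ = r := by simpa [hS] using hS₀.symm
    obtain rfl : m = 0 := by
      by_contra hm0
      exact hne (by simp [edgeLabel_of_splitAt hs, hm0])
    obtain rfl : P = S' := by simpa [seqAt, hS'] using h₀.symm
    obtain ⟨μ, hμ, hμi, hc₁, hc₂⟩ :=
      (G.splits r₀ S₀ P hb hI).trace τ τ' hmem hind hmem' hind' hconn
    refine ⟨μ, ⟨S₀, G.top r₀ S₀ P, 0, by simp [nodeLabel_of_splitAt hs], hmem, hind, rfl, hc₁⟩,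
      ⟨G.mid r₀ S₀ P, G.bot r₀ S₀ P, 0, by simp [edgeLabel_of_splitAt hs], hμ, hμi, hmid, hc₂⟩,
      fun ⟨S₁, r₁, m₁, h₁, _, h₃⟩ => ?_⟩
    obtain ⟨rfl, rfl⟩ : S₁ = S₀ ∧ r₁ = r₀ := by simpa [hS] using h₁.symm
    exact absurd h₃ (hI.not_progStep m₁ τ τ')

theorem exists_traceStep_subdivide_of_path {q p : ℕ → List ℕ} {n : ℕ → ℕ} {i₀ k : ℕ} {τ : ℕ → Fm}
    (hq : IsInfPath (G.subdivide f) q)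
    (hp : ∀ j, f (p j) ≠ none ∧ p (j + 1) = p j ++ [n j] ∧
      q (i₀ + 2 * j) = subdivAddr (p j) ∧ q (i₀ + 2 * j + 1) = subdivAddr (p j) ++ [n j])
    (htr : IsTraceFrom f p k τ) {j : ℕ} (hkj : k ≤ j) :
    ∃ μ, TraceStep (G.subdivide f) (q (i₀ + 2 * j)) (q (i₀ + 2 * j + 1)) (τ j) μ ∧
      TraceStep (G.subdivide f) (q (i₀ + 2 * j + 1)) (q (i₀ + 2 * (j + 1))) μ (τ (j + 1)) ∧
      (progAt f p τ j →
        ProgStep (G.subdivide f) (q (i₀ + 2 * j)) (q (i₀ + 2 * j + 1)) (τ j) μ) := by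
  obtain ⟨-, hpn, hqe, hqo⟩ := hp j
  have hne := hq.1 (i₀ + 2 * j + 1)
  rw [hqo, subdivide_subdivAddr_snoc] at hne
  obtain ⟨S', r', -, hS', hmem', hind', -⟩ := htr (j + 1) (by omega)
  have hstep : TraceStep f (p j) (p j ++ [n j]) (τ j) (τ (j + 1)) := hpn ▸ htr j hkj
  obtain ⟨μ, h₁, h₂, h₃⟩ :=
    exists_traceStep_subdivide hstep ⟨S', r', hpn ▸ hS', hmem', hind'⟩ hne
  rw [hqe, hqo, (hp (j + 1)).2.2.1, hpn]
  exact ⟨μ, h₁, h₂, fun h => h₃ (hpn ▸ h)⟩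

theorem gtc_subdivide (hf : GTC f) : GTC (G.subdivide f) := by
  intro q hq
  obtain ⟨i₀, p, n, hp⟩ := hq.exists_subdivAddr
  obtain ⟨k, τ, htr, hprog⟩ := hf p ⟨fun j => (hp j).1, fun j => ⟨n j, (hp j).2.1⟩⟩
  have : Nonempty Fm := ⟨τ 0⟩
  choose! μ hμ using fun j (hkj : k ≤ j) => exists_traceStep_subdivide_of_path hq hp htr hkj
  refine ⟨i₀ + 2 * k, interleave i₀ τ μ, fun i hi => ?_, fun m => ?_⟩
  · change TraceStep _ _ _ (interleave i₀ τ μ i) (interleave i₀ τ μ (i + 1))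
    obtain ⟨j, rfl | rfl⟩ : ∃ j, i = i₀ + 2 * j ∨ i = i₀ + 2 * j + 1 := ⟨(i - i₀) / 2, by omega⟩
    · rw [interleave_even, interleave_odd]
      exact (hμ j (by omega)).1
    · rw [show i₀ + 2 * j + 1 + 1 = i₀ + 2 * (j + 1) by ring, interleave_odd, interleave_even]
      exact (hμ j (by omega)).2.1
  · obtain ⟨j, hmj, hkj, hpj⟩ := hprog m
    refine ⟨i₀ + 2 * j, by omega, by omega, ?_⟩
    change ProgStep _ _ _ (interleave i₀ τ μ _) (interleave i₀ τ μ _)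
    rw [interleave_even, interleave_odd]
    exact (hμ j hkj).2.2 hpj

end Splitting

theorem PreProof.exists_isProof_not_usesRule (bad : Rule → Prop) (hbud : ¬ bad .bud)
    (hweak : ¬ bad .weak) (hunary : ∀ r S L, bad r → Inf r S L → ∃ P, L = [P])
    (hsplit : ∀ r S P, bad r → Inf r S [P] → ∃ r₁ M r₂, Splits bad r S P r₁ M r₂)
    {P : PreProof} (hP : P.IsProof) {S : Seq} (hS : P.Concl S) :
    ∃ P' : PreProof, P'.IsProof ∧ ¬ usesRule P'.D.label bad ∧ P'.Concl S := by
  have hsplit' (r : Rule) (S P : Seq) :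
      ∃ r₁ M r₂, bad r → Inf r S [P] → Splits bad r S P r₁ M r₂ := by
    by_cases h : bad r ∧ Inf r S [P]
    · obtain ⟨r₁, M, r₂, hs⟩ := hsplit r S P h.1 h.2
      exact ⟨r₁, M, r₂, fun _ _ => hs⟩
    · exact ⟨r, S, r, fun hb hI => absurd ⟨hb, hI⟩ h⟩
  choose top mid bot hG using hsplit'
  let G : Splitting bad := ⟨top, mid, bot, hG⟩
  obtain ⟨T, hT, hgtc⟩ := hP
  obtain ⟨r, hr⟩ := hS
  obtain ⟨r', hr'⟩ := Splitting.exists_nodeLabel_eq (G := G) hr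
  exact ⟨G.subdividePreProof hunary P, ⟨_, Splitting.isUnfolding_subdivide hunary hT,
    Splitting.gtc_subdivide hgtc⟩, Splitting.not_usesRule_subdivide P.D hunary hbud hweak,
    r', hr'⟩

theorem Tm.fv_finite (t : Tm) : t.fv.Finite := by
  induction t with
  | var x => exact Set.finite_singleton x
  | zero => exact Set.finite_empty
  | s t ih => exact ih

theorem Fm.fv_finite (φ : Fm) : φ.fv.Finite := by
  induction φ with
  | eq t u => exact t.fv_finite.union u.fv_finite
  | add1 a b c | add2 a b c => exact (a.fv_finite.union b.fv_finite).union c.fv_finite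
  | not φ ih => exact ih
  | and φ ψ ih₁ ih₂ | or φ ψ ih₁ ih₂ | imp φ ψ ih₁ ih₂ => exact ih₁.union ih₂
  | all x φ ih | ex x φ ih => exact ih.sdiff

theorem Tm.subst_congr {θ θ' : ℕ → Tm} {t : Tm} (h : ∀ x ∈ t.fv, θ x = θ' x) :
    t.subst θ = t.subst θ' := by
  induction t with
  | var x => exact h x rfl
  | zero => rfl
  | s t ih => exact congrArg Tm.s (ih h)

theorem Fm.subst_congr {θ θ' : ℕ → Tm} {φ : Fm} (h : ∀ x ∈ φ.fv, θ x = θ' x) :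
    φ.subst θ = φ.subst θ' := by
  induction φ generalizing θ θ' with
  | eq t u =>
    simp only [Fm.subst, Tm.subst_congr fun x hx => h x (.inl hx),
      Tm.subst_congr fun x hx => h x (.inr hx)]
  | add1 a b c | add2 a b c =>
    simp only [Fm.subst, Tm.subst_congr fun x hx => h x (.inl (.inl hx)),
      Tm.subst_congr fun x hx => h x (.inl (.inr hx)), Tm.subst_congr fun x hx => h x (.inr hx)]
  | not φ ih => simp only [Fm.subst, ih h]
  | and φ ψ ih₁ ih₂ | or φ ψ ih₁ ih₂ | imp φ ψ ih₁ ih₂ =>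
    simp only [Fm.subst, ih₁ fun x hx => h x (.inl hx), ih₂ fun x hx => h x (.inr hx)]
  | all x φ ih | ex x φ ih =>
    simp only [Fm.subst]
    congr 1
    refine ih fun y hy => ?_
    by_cases hyx : y = x
    · simp [hyx]
    · simp [Function.update_of_ne hyx, h y ⟨hy, hyx⟩]

theorem Fm.subst_var (φ : Fm) : φ.subst Tm.var = φ := by
  have ht (t : Tm) : t.subst Tm.var = t := by induction t <;> simp_all [Tm.subst]
  induction φ <;> simp_all [Fm.subst]

theorem Fm.subst_eq_self {θ : ℕ → Tm} {φ : Fm} (h : ∀ x ∈ φ.fv, θ x = .var x) : φ.subst θ = φ :=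
  (Fm.subst_congr h).trans φ.subst_var

theorem Tm.mem_fv_subst {θ : ℕ → Tm} {t : Tm} {x : ℕ} (hx : x ∈ t.fv) (hθ : θ x = .var x) :
    x ∈ (t.subst θ).fv := by
  induction t with
  | var y =>
    obtain rfl : y = x := hx.symm
    simp [Tm.subst, hθ, Tm.fv]
  | zero => exact hx
  | s t ih => exact ih hx

theorem Fm.mem_fv_subst {θ : ℕ → Tm} {φ : Fm} {x : ℕ} (hx : x ∈ φ.fv) (hθ : θ x = .var x) :
    x ∈ (φ.subst θ).fv := by
  induction φ generalizing θ with
  | eq t u => rcases hx with hx | hx <;> simp [Fm.subst, Fm.fv, Tm.mem_fv_subst hx hθ]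
  | add1 a b c | add2 a b c =>
    rcases hx with (hx | hx) | hx <;> simp [Fm.subst, Fm.fv, Tm.mem_fv_subst hx hθ]
  | not φ ih => exact ih hx hθ
  | and φ ψ ih₁ ih₂ | or φ ψ ih₁ ih₂ | imp φ ψ ih₁ ih₂ =>
    rcases hx with hx | hx
    · exact .inl (ih₁ hx hθ)
    · exact .inr (ih₂ hx hθ)
  | all y φ ih | ex y φ ih =>
    obtain ⟨hx, hxy⟩ := hx
    exact ⟨ih hx (by simp [Function.update_of_ne hxy, hθ]), hxy⟩

def IsEqL (r : Rule) : Prop := ∃ v1 v2 t u, r = .eqL v1 v2 t u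

def IsEqLa (r : Rule) : Prop := ∃ v1 v2 t u, r = .eqLa v1 v2 t u

theorem exists_splits_eqL {r : Rule} {S P : Seq} (hr : IsEqL r) (hI : Inf r S [P]) :
    ∃ r₁ M r₂, Splits IsEqL r S P r₁ M r₂ := by
  obtain ⟨v1, v2, t, u, rfl⟩ := hr
  cases hI
  exact ⟨_, _, _, Inf.eqLa, Inf.weak (Finset.subset_insert _ _) subset_rfl,
    by rintro ⟨_, _, _, _, ⟨⟩⟩, by rintro ⟨_, _, _, _, ⟨⟩⟩,
    fun _ τ' _ _ hτ' hτ'i hc => ⟨τ', Finset.mem_insert_of_mem hτ', hτ'i, hc, rfl⟩⟩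

theorem Fm.subst_sub2_of_notMem {φ : Fm} {w : ℕ} (hw : w ∉ φ.fv) (v : ℕ) (a b : Tm) :
    φ.subst (sub2 v w a b) = φ.subst (sub2 v v a b) :=
  Fm.subst_congr fun x hx => by
    have : x ≠ w := fun h => hw (h ▸ hx)
    by_cases hxv : x = v <;> simp [sub2, hxv, this]

theorem Fm.subst_sub2_eq_self {φ : Fm} {w₁ w₂ : ℕ} (h₁ : w₁ ∉ φ.fv) (h₂ : w₂ ∉ φ.fv) (a b : Tm) :
    φ.subst (sub2 w₁ w₂ a b) = φ :=
  Fm.subst_eq_self fun x hx => by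
    simp [sub2, show x ≠ w₁ from fun h => h₁ (h ▸ hx), show x ≠ w₂ from fun h => h₂ (h ▸ hx)]

/-- The instance of (= L) whose context contains `v1 = v2`: it keeps the equation, reversed. -/
theorem Inf.eqL_of_ne {Γ Δ : Finset Fm} {v1 v2 : ℕ} {t u : Tm} (hv : v1 ≠ v2) :
    Inf (.eqL v1 v2 t u)
      ⟨insert (.eq t u) (Γ.image (Fm.subst (sub2 v1 v2 t u))), Δ.image (Fm.subst (sub2 v1 v2 t u))⟩
      [⟨insert (.eq u t) (Γ.image (Fm.subst (sub2 v1 v2 u t))),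
        Δ.image (Fm.subst (sub2 v1 v2 u t))⟩] := by
  have := @Inf.eqL (insert (.eq (.var v1) (.var v2)) Γ) Δ v1 v2 t u
  simpa [Finset.image_insert, Fm.subst, Tm.subst, sub2, hv.symm] using this

theorem Inf.eqL_swap {Γ Δ : Finset Fm} {w₁ w₂ : ℕ} (t u : Tm) (hw : w₁ ≠ w₂)
    (hΓ : ∀ φ ∈ Γ, w₁ ∉ φ.fv ∧ w₂ ∉ φ.fv) (hΔ : ∀ φ ∈ Δ, w₁ ∉ φ.fv ∧ w₂ ∉ φ.fv) :
    Inf (.eqL w₁ w₂ u t) ⟨insert (.eq u t) Γ, Δ⟩ [⟨insert (.eq t u) Γ, Δ⟩] := by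
  have hid {Ψ : Finset Fm} (hΨ : ∀ φ ∈ Ψ, w₁ ∉ φ.fv ∧ w₂ ∉ φ.fv) (a b : Tm) :
      Ψ.image (Fm.subst (sub2 w₁ w₂ a b)) = Ψ :=
    (Finset.image_congr fun φ hφ => Fm.subst_sub2_eq_self (hΨ φ hφ).1 (hΨ φ hφ).2 a b).trans
      Finset.image_id'
  simpa only [hid hΓ, hid hΔ] using Inf.eqL_of_ne (Γ := Γ) (Δ := Δ) (t := u) (u := t) hw

theorem exists_fresh_pair (Φ : Finset Fm) (V : Finset ℕ) :
    ∃ w₁ w₂, w₁ ≠ w₂ ∧ w₁ ∉ V ∧ ∀ φ ∈ Φ, w₁ ∉ φ.fv ∧ w₂ ∉ φ.fv := by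
  have hfin : (↑V ∪ ⋃ φ ∈ Φ, φ.fv : Set ℕ).Finite :=
    V.finite_toSet.union (Φ.finite_toSet.biUnion fun φ _ => φ.fv_finite)
  obtain ⟨w₁, hw₁⟩ := hfin.exists_notMem
  obtain ⟨w₂, hw₂⟩ := (hfin.insert w₁).exists_notMem
  simp only [Set.mem_union, Set.mem_iUnion, Finset.mem_coe, not_or, not_exists,
    Set.mem_insert_iff] at hw₁ hw₂
  exact ⟨w₁, w₂, Ne.symm hw₂.1, hw₁.1, fun φ hφ => ⟨hw₁.2 φ hφ, hw₂.2.2 φ hφ⟩⟩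

theorem isIndAtom.mem_of_mem_insert_eq {τ : Fm} {s : Finset Fm} {a b : Tm} (hτ : isIndAtom τ)
    (h : τ ∈ insert (Fm.eq a b) s) : τ ∈ s := by
  rcases Finset.mem_insert.mp h with rfl | h
  · rcases hτ with ⟨_, _, _, ⟨⟩⟩ | ⟨_, _, _, ⟨⟩⟩
  · exact h

theorem exists_ne_forall_subst_sub2_eq (v1 v2 : ℕ) {w : ℕ} (hw : w ≠ v1) :
    ∃ v2', v1 ≠ v2' ∧
      ∀ φ : Fm, w ∉ φ.fv → ∀ a b, φ.subst (sub2 v1 v2' a b) = φ.subst (sub2 v1 v2 a b) := by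
  by_cases h : v1 = v2
  · subst h
    exact ⟨w, hw.symm, fun φ hφ a b => Fm.subst_sub2_of_notMem hφ v1 a b⟩
  · exact ⟨v2, h, fun _ _ _ _ => rfl⟩

theorem exists_splits_eqLa {r : Rule} {S P : Seq} (hr : IsEqLa r) (hI : Inf r S [P]) :
    ∃ r₁ M r₂, Splits IsEqLa r S P r₁ M r₂ := by
  obtain ⟨v1, v2, t, u, rfl⟩ := hr
  cases hI with
  | @eqLa Γ Δ =>
  set A := Γ.image (Fm.subst (sub2 v1 v2 t u))
  set A' := Γ.image (Fm.subst (sub2 v1 v2 u t))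
  set B' := Δ.image (Fm.subst (sub2 v1 v2 u t))
  obtain ⟨w₁, w₂, hw, hwv, hfresh⟩ := exists_fresh_pair (Γ ∪ Δ ∪ A ∪ A' ∪ B') {v1, v2}
  obtain ⟨v2', hv, hren⟩ := exists_ne_forall_subst_sub2_eq v1 v2 (w := w₁) (by simp_all)
  have hsub : Γ ∪ Δ ⊆ Γ ∪ Δ ∪ A ∪ A' ∪ B' :=
    Finset.subset_union_left.trans (Finset.subset_union_left.trans Finset.subset_union_left)
  have hrenImg {Ψ : Finset Fm} (hΨ : Ψ ⊆ Γ ∪ Δ) (a b : Tm) :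
      Ψ.image (Fm.subst (sub2 v1 v2' a b)) = Ψ.image (Fm.subst (sub2 v1 v2 a b)) :=
    Finset.image_congr fun φ hφ => hren φ (hfresh φ (hsub (hΨ (Finset.mem_coe.mp hφ)))).1 a b
  refine ⟨.eqL v1 v2' t u, ⟨insert (.eq u t) A', B'⟩, .eqL w₁ w₂ u t, ?_, ?_,
    by rintro ⟨_, _, _, _, ⟨⟩⟩, by rintro ⟨_, _, _, _, ⟨⟩⟩, ?_⟩
  · simpa only [hrenImg Finset.subset_union_left, hrenImg Finset.subset_union_right] using
      Inf.eqL_of_ne (Γ := Γ) (Δ := Δ) (t := t) (u := u) hv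
  · exact Inf.eqL_swap t u hw (fun φ hφ => hfresh φ (by simp [hφ]))
      (fun φ hφ => hfresh φ (by simp [hφ]))
  · rintro τ τ' hτ hτi hτ' hτ'i ⟨F, rfl, rfl⟩
    have hτA := hτi.mem_of_mem_insert_eq hτ
    have hτA' := hτ'i.mem_of_mem_insert_eq hτ'
    have hwF : w₁ ∉ F.fv := fun h => (hfresh _ (by simp [hτA])).1
      (Fm.mem_fv_subst (θ := sub2 v1 v2 t u) h (by simp_all [sub2]))
    refine ⟨_, Finset.mem_insert_of_mem hτA', hτ'i, ⟨F, ?_, ?_⟩,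
      _, (Fm.subst_sub2_eq_self ?_ ?_ u t).symm, (Fm.subst_sub2_eq_self ?_ ?_ t u).symm⟩
    · rw [hren F hwF]
    · rw [hren F hwF]
    all_goals simp_all

theorem IsEqL.exists_eq_singleton {r : Rule} {S : Seq} {L : List Seq} (hr : IsEqL r)
    (hI : Inf r S L) : ∃ P, L = [P] := by
  obtain ⟨v1, v2, t, u, rfl⟩ := hr
  cases hI
  exact ⟨_, rfl⟩

theorem IsEqLa.exists_eq_singleton {r : Rule} {S : Seq} {L : List Seq} (hr : IsEqLa r)
    (hI : Inf r S L) : ∃ P, L = [P] := by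
  obtain ⟨v1, v2, t, u, rfl⟩ := hr
  cases hI
  exact ⟨_, rfl⟩

/-- `CLKID^ω` and `CLKID^ω_a` prove the same sequents. -/
theorem provable_iff_provable_a (S : Seq) : ProvableW S ↔ ProvableWa S := by
  constructor
  · rintro ⟨P, hP, -, hS⟩
    exact P.exists_isProof_not_usesRule IsEqL (by rintro ⟨_, _, _, _, ⟨⟩⟩)
      (by rintro ⟨_, _, _, _, ⟨⟩⟩) (fun _ _ _ => IsEqL.exists_eq_singleton)
      (fun _ _ _ => exists_splits_eqL) hP hS
  · rintro ⟨P, hP, -, hS⟩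
    exact P.exists_isProof_not_usesRule IsEqLa (by rintro ⟨_, _, _, _, ⟨⟩⟩)
      (by rintro ⟨_, _, _, _, ⟨⟩⟩) (fun _ _ _ => IsEqLa.exists_eq_singleton)
      (fun _ _ _ => exists_splits_eqLa) hP hS

end CLKID
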